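/- Let θ : [0,∞) → (0,1) be continuous, decreasing and integrable, and set Θ = exp(−∫₀^∞ θ(s) ds). Let u₀ ∈ C(ℝ) be compactly supported with 0 ≤ u₀ ≤ 1, u₀ ≢ 0, let w(t,·) = Γ(t,·) * u₀ where Γ(t,x) = (4πt)^{−1/2} e^{−x²/(4t)}, let χ be a smooth cut-off with 0 ≤ χ ≤ 1, χ = 1 on [−1/2, 1/2], χ = 0 outside (−1,1), and set z(t,x) = Θ χ(x/√t) w(t,x). Then there exists C > 0 such that for all sufficiently large t > 0, the reaction part of the energy satisfies E^r_{√t, θ(t)}(z(t,·)) := ∫_{−√t}^{√t} ( z⁴(t,x)/4 − (1+θ(t))z³(t,x)/3 + θ(t)z²(t,x)/2 ) dx ≤ −C/t + C θ(t) t^{−1/2}. -/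

import Mathlib

noncomputable def heatKernel (t x : ℝ) : ℝ :=
  (Real.sqrt (4 * Real.pi * t))⁻¹ * Real.exp (-(x ^ 2) / (4 * t))

noncomputable def heatConv (u₀ : ℝ → ℝ) (t x : ℝ) : ℝ :=
  ∫ y, heatKernel t (x - y) * u₀ y

open MeasureTheory Real Filter Set

lemma hk_nonneg (t x : ℝ) : 0 ≤ heatKernel t x := by unfold heatKernel; positivity

lemma hk_le {t : ℝ} (ht : 0 < t) (x : ℝ) :
    heatKernel t x ≤ (Real.sqrt (4 * Real.pi * t))⁻¹ := by
  unfold heatKernel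
  nth_rewrite 2 [← mul_one (Real.sqrt (4 * Real.pi * t))⁻¹]
  gcongr
  calc Real.exp (-(x ^ 2) / (4 * t)) ≤ Real.exp 0 := by
        apply Real.exp_le_exp.mpr
        apply div_nonpos_of_nonpos_of_nonneg
        · simp [sq_nonneg x]
        · positivity
    _ = 1 := Real.exp_zero

lemma hk_ge {t x : ℝ} (ht : 0 < t) (hx : x ^ 2 ≤ t) :
    Real.exp (-4⁻¹) * (Real.sqrt (4 * Real.pi * t))⁻¹ ≤ heatKernel t x := by
  unfold heatKernel
  rw [mul_comm]
  gcongr (Real.sqrt (4 * Real.pi * t))⁻¹ * ?_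
  apply Real.exp_le_exp.mpr
  rw [neg_div, neg_le_neg_iff, div_le_iff₀ (by positivity)]
  calc x ^ 2 ≤ t := hx
    _ ≤ 4⁻¹ * (4 * t) := by ring_nf; linarith

lemma hk_cont (t : ℝ) : Continuous fun x : ℝ => heatKernel t x := by
  unfold heatKernel
  exact continuous_const.mul (Real.continuous_exp.comp
    ((continuous_pow 2).neg.div_const _))

lemma heatConv_sm {u₀ : ℝ → ℝ} (hc : Continuous u₀) (t : ℝ) :
    StronglyMeasurable (heatConv u₀ t) := by
  have hcont : Continuous fun p : ℝ × ℝ => heatKernel t (p.1 - p.2) * u₀ p.2 :=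
    ((hk_cont t).comp (continuous_fst.sub continuous_snd)).mul (hc.comp continuous_snd)
  exact hcont.stronglyMeasurable.integral_prod_right'

lemma ev_sqrt (c : ℝ) : ∀ᶠ t in Filter.atTop, c ≤ Real.sqrt t := by
  filter_upwards [eventually_ge_atTop (c ^ 2)] with t ht
  calc c ≤ |c| := le_abs_self c
    _ = Real.sqrt (c ^ 2) := (Real.sqrt_sq_eq_abs c).symm
    _ ≤ Real.sqrt t := Real.sqrt_le_sqrt ht

set_option maxHeartbeats 2000000 in
/-- **Decay of the reaction energy.** Let `θ : [0,∞) → (0,1)` be continuous,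
decreasing, integrable, `Θ = exp(−∫₀^∞ θ)`, `u₀` compactly supported continuous
with `0 ≤ u₀ ≤ 1`, `u₀ ≢ 0`, `χ` a smooth cut-off and
`z(t,x) = Θ χ(x/√t) w(t,x)` with `w` the heat semigroup applied to `u₀`.
Then there is `C > 0` such that for all large `t`,
`E^r_{√t,θ(t)}(z(t,·)) = ∫_{−√t}^{√t} (z⁴/4 − (1+θ(t))z³/3 + θ(t)z²/2) dx
  ≤ −C/t + C θ(t) t^{−1/2}`. -/
theorem reaction_energy_decay
    (θ : ℝ → ℝ)
    (hθ_mem : ∀ t ≥ (0 : ℝ), θ t ∈ Set.Ioo (0 : ℝ) 1)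
    (hθ_cont : ContinuousOn θ (Set.Ici 0))
    (hθ_anti : AntitoneOn θ (Set.Ici 0))
    (hθ_int : MeasureTheory.IntegrableOn θ (Set.Ici 0))
    (u₀ : ℝ → ℝ) (hu₀_cont : Continuous u₀) (hu₀_supp : HasCompactSupport u₀)
    (hu₀_mem : ∀ x, 0 ≤ u₀ x ∧ u₀ x ≤ 1) (hu₀_ne : ∃ x, u₀ x ≠ 0)
    (χ : ℝ → ℝ) (hχ_smooth : ContDiff ℝ (⊤ : ℕ∞) χ)
    (hχ_mem : ∀ x, 0 ≤ χ x ∧ χ x ≤ 1)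
    (hχ_one : ∀ x : ℝ, |x| ≤ 1 / 2 → χ x = 1)
    (hχ_zero : ∀ x : ℝ, 1 ≤ |x| → χ x = 0)
    (z : ℝ → ℝ → ℝ)
    (hz : ∀ t x, z t x
      = Real.exp (-∫ s in Set.Ioi (0 : ℝ), θ s) * χ (x / Real.sqrt t)
        * heatConv u₀ t x) :
    ∃ C > (0 : ℝ), ∀ᶠ t in Filter.atTop,
      (∫ x in Set.Ioo (-Real.sqrt t) (Real.sqrt t),
          ((z t x) ^ 4 / 4 - (1 + θ t) * (z t x) ^ 3 / 3 + θ t * (z t x) ^ 2 / 2))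
        ≤ -C / t + C * θ t * t ^ (-(1 : ℝ) / 2) := by
  classical
  obtain ⟨x₀, hx₀⟩ := hu₀_ne
  set I := ∫ s in Set.Ioi (0 : ℝ), θ s with hIdef
  clear_value I
  have hI0 : 0 ≤ I := by
    rw [hIdef]
    exact setIntegral_nonneg measurableSet_Ioi fun s hs => (hθ_mem s (le_of_lt hs)).1.le
  set Θ := Real.exp (-I) with hΘdef
  clear_value Θ
  have hΘ0 : 0 < Θ := by rw [hΘdef]; exact Real.exp_pos _
  have hΘ1 : Θ ≤ 1 := by
    rw [hΘdef]
    calc Real.exp (-I) ≤ Real.exp 0 := Real.exp_le_exp.mpr (by linarith)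
      _ = 1 := Real.exp_zero
  have hu₀int : Integrable u₀ := hu₀_cont.integrable_of_hasCompactSupport hu₀_supp
  set m := ∫ y, u₀ y with hmdef
  clear_value m
  have hm : 0 < m := by
    rw [hmdef]
    exact integral_pos_of_integrable_nonneg_nonzero hu₀_cont hu₀int
      (fun x => (hu₀_mem x).1) hx₀
  obtain ⟨A₀, hA₀⟩ := (Metric.isBounded_iff_subset_closedBall 0).mp hu₀_supp.isBounded
  set A := max A₀ 1 with hAdef
  clear_value A
  have hA1 : (1 : ℝ) ≤ A := by rw [hAdef]; exact le_max_right _ _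
  have hAbd : ∀ y, u₀ y ≠ 0 → |y| ≤ A := by
    intro y hy
    have h1 : y ∈ Metric.closedBall 0 A₀ := hA₀ (subset_tsupport _ hy)
    have h2 : |y| ≤ A₀ := by simpa [Real.dist_eq] using h1
    rw [hAdef]
    exact h2.trans (le_max_left _ _)
  set sπ := Real.sqrt (4 * Real.pi) with hsπdef
  have hsπ0 : 0 < sπ := Real.sqrt_pos.mpr (by positivity)
  have hsπ2 : sπ ^ 2 = 4 * Real.pi := Real.sq_sqrt (by positivity)
  clear_value sπ
  set c₁ := Θ * Real.exp (-4⁻¹) * m with hc₁def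
  clear_value c₁
  have hc₁0 : 0 < c₁ := by rw [hc₁def]; exact mul_pos (mul_pos hΘ0 (Real.exp_pos _)) hm
  set c₃ := (c₁ / sπ) ^ 3 with hc₃def
  clear_value c₃
  have hc₃0 : 0 < c₃ := by rw [hc₃def]; positivity
  refine ⟨c₃ / 24, by positivity, ?_⟩
  filter_upwards [eventually_ge_atTop (1 : ℝ), ev_sqrt (2 * A), ev_sqrt (Θ * m / sπ),
    ev_sqrt (12 * I * m ^ 2 / (Real.pi * c₃))] with t ht1 hEb' hEc' hEd'
  set s := Real.sqrt t with hsdef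
  have ht0 : 0 < t := lt_of_lt_of_le one_pos ht1
  have hs0 : 0 < s := Real.sqrt_pos.mpr ht0
  have hss : s * s = t := Real.mul_self_sqrt ht0.le
  clear_value s
  have hEb : 2 * A ≤ s := hEb'
  have hEc : Θ * m ≤ sπ * s := by
    rw [div_le_iff₀ hsπ0] at hEc'
    linarith [mul_comm s sπ]
  have hEd : 12 * I * m ^ 2 ≤ Real.pi * c₃ * s := by
    rw [div_le_iff₀ (by positivity)] at hEd'
    linarith [mul_comm s (Real.pi * c₃)]
  have hθt := hθ_mem t (by linarith)
  have hθt0 : 0 < θ t := hθt.1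
  have hθt1 : θ t < 1 := hθt.2
  -- the rescaled kernel factor
  have h4πt : Real.sqrt (4 * Real.pi * t) = sπ * s := by
    rw [hsπdef, hsdef, ← Real.sqrt_mul (by positivity)]
  -- integrability of the kernel against u₀
  have hkint : ∀ x : ℝ, Integrable fun y => heatKernel t (x - y) * u₀ y := by
    intro x
    apply Continuous.integrable_of_hasCompactSupport
    · exact ((hk_cont t).comp (continuous_const.sub continuous_id)).mul hu₀_cont
    · exact hu₀_supp.mul_left
  have hw0 : ∀ x, 0 ≤ heatConv u₀ t x := fun x =>
    integral_nonneg fun y => mul_nonneg (hk_nonneg _ _) (hu₀_mem y).1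
  have hwle : ∀ x, heatConv u₀ t x ≤ m * (sπ * s)⁻¹ := by
    intro x
    have h1 : heatConv u₀ t x ≤ ∫ y, (Real.sqrt (4 * Real.pi * t))⁻¹ * u₀ y := by
      apply integral_mono (hkint x) (hu₀int.const_mul _)
      intro y
      exact mul_le_mul_of_nonneg_right (hk_le ht0 _) (hu₀_mem y).1
    rw [MeasureTheory.integral_const_mul, h4πt, ← hmdef] at h1
    linarith [h1, mul_comm (sπ * s)⁻¹ m]
  have hwge : ∀ x, |x| ≤ s / 2 →
      Real.exp (-4⁻¹) * (sπ * s)⁻¹ * m ≤ heatConv u₀ t x := by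
    intro x hx
    have hptle : ∀ y, Real.exp (-4⁻¹) * (Real.sqrt (4 * Real.pi * t))⁻¹ * u₀ y
        ≤ heatKernel t (x - y) * u₀ y := by
      intro y
      by_cases hy : u₀ y = 0
      · simp [hy]
      · apply mul_le_mul_of_nonneg_right _ (hu₀_mem y).1
        apply hk_ge ht0
        have hyA : |y| ≤ A := hAbd y hy
        have habs : |x - y| ≤ s := by
          have : |x - y| ≤ |x| + |y| := by
            rw [sub_eq_add_neg]
            exact (abs_add_le _ _).trans (by rw [abs_neg])
          linarith
        calc (x - y) ^ 2 = |x - y| ^ 2 := (sq_abs _).symm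
          _ ≤ s ^ 2 := pow_le_pow_left₀ (abs_nonneg _) habs 2
          _ = t := by rw [sq]; exact hss
    have h1 := integral_mono (hu₀int.const_mul _) (hkint x) hptle
    rw [MeasureTheory.integral_const_mul, ← hmdef, h4πt] at h1
    calc Real.exp (-4⁻¹) * (sπ * s)⁻¹ * m = Real.exp (-4⁻¹) * (sπ * s)⁻¹ * m := rfl
      _ ≤ heatConv u₀ t x := h1
  -- facts about Z
  set Z := z t with hZdef
  clear_value Z
  have hzt : ∀ x, Z x = Θ * χ (x / s) * heatConv u₀ t x := fun x => by
    rw [hZdef, hsdef]; exact hz t x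
  have hZ0 : ∀ x, 0 ≤ Z x := fun x => by
    rw [hzt x]
    exact mul_nonneg (mul_nonneg hΘ0.le (hχ_mem _).1) (hw0 x)
  have hZle : ∀ x, Z x ≤ Θ * m * (sπ * s)⁻¹ := by
    intro x
    rw [hzt x]
    calc Θ * χ (x / s) * heatConv u₀ t x ≤ Θ * 1 * (m * (sπ * s)⁻¹) := by
          apply mul_le_mul
          · exact mul_le_mul_of_nonneg_left (hχ_mem _).2 hΘ0.le
          · exact hwle x
          · exact hw0 x
          · linarith
      _ = Θ * m * (sπ * s)⁻¹ := by ring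
  have hZ1 : ∀ x, Z x ≤ 1 := by
    intro x
    refine (hZle x).trans ?_
    have h1 : Θ * m * (sπ * s)⁻¹ ≤ (sπ * s) * (sπ * s)⁻¹ :=
      mul_le_mul_of_nonneg_right hEc (by positivity)
    rw [mul_inv_cancel₀ (by positivity)] at h1
    exact h1
  have hZge : ∀ x, |x| ≤ s / 2 → c₁ * (sπ * s)⁻¹ ≤ Z x := by
    intro x hx
    rw [hzt x]
    have hχ1 : χ (x / s) = 1 := by
      apply hχ_one
      rw [abs_div, abs_of_pos hs0, div_le_iff₀ hs0]
      linarith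
    rw [hχ1, mul_one]
    calc c₁ * (sπ * s)⁻¹ = Θ * (Real.exp (-4⁻¹) * (sπ * s)⁻¹ * m) := by
          rw [hc₁def]; ring
      _ ≤ Θ * heatConv u₀ t x := mul_le_mul_of_nonneg_left (hwge x hx) hΘ0.le
  have hZsm : StronglyMeasurable Z := by
    have hfe : Z = fun x => Θ * χ (x / s) * heatConv u₀ t x := funext hzt
    rw [hfe]
    exact ((stronglyMeasurable_const.mul
      ((hχ_smooth.continuous.comp (continuous_id.div_const s)).stronglyMeasurable)).mul
      (heatConv_sm hu₀_cont t))
  -- integrability of bounded measurable functions on bounded intervals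
  have hbdd : ∀ g : ℝ → ℝ, Measurable g → (∀ x, |g x| ≤ 10) →
      ∀ a b : ℝ, IntegrableOn g (Set.Ioo a b) := by
    intro g hg hb a b
    apply Measure.integrableOn_of_bounded (M := 10) measure_Ioo_lt_top.ne
      hg.aestronglyMeasurable
    exact ae_of_all _ fun x => by rw [Real.norm_eq_abs]; exact hb x
  have hZm : Measurable Z := hZsm.measurable
  have int2 : ∀ a b : ℝ, IntegrableOn (fun x => Z x ^ 2) (Set.Ioo a b) := by
    apply hbdd _ (hZm.pow_const 2)
    intro x
    show |Z x ^ 2| ≤ 10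
    rw [abs_le]
    constructor <;>
      linarith [pow_nonneg (hZ0 x) 2, pow_le_one₀ (hZ0 x) (hZ1 x) (n := 2)]
  have int3 : ∀ a b : ℝ, IntegrableOn (fun x => Z x ^ 3) (Set.Ioo a b) := by
    apply hbdd _ (hZm.pow_const 3)
    intro x
    show |Z x ^ 3| ≤ 10
    rw [abs_le]
    constructor <;>
      linarith [pow_nonneg (hZ0 x) 3, pow_le_one₀ (hZ0 x) (hZ1 x) (n := 3)]
  have int1 : IntegrableOn
      (fun x => Z x ^ 4 / 4 - (1 + θ t) * Z x ^ 3 / 3 + θ t * Z x ^ 2 / 2)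
      (Set.Ioo (-s) s) := by
    apply hbdd _ ?_ ?_ (-s) s
    · exact ((((hZm.pow_const 4).div_const 4).sub
        (((hZm.pow_const 3).const_mul _).div_const 3)).add
        (((hZm.pow_const 2).const_mul _).div_const 2))
    · intro x
      show |Z x ^ 4 / 4 - (1 + θ t) * Z x ^ 3 / 3 + θ t * Z x ^ 2 / 2| ≤ 10
      rw [abs_le]
      have hp2 := pow_nonneg (hZ0 x) 2
      have hp3 := pow_nonneg (hZ0 x) 3
      have hp4 := pow_nonneg (hZ0 x) 4
      have hq2 := pow_le_one₀ (hZ0 x) (hZ1 x) (n := 2)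
      have hq3 := pow_le_one₀ (hZ0 x) (hZ1 x) (n := 3)
      have hq4 := pow_le_one₀ (hZ0 x) (hZ1 x) (n := 4)
      have hb1 : (1 + θ t) * Z x ^ 3 ≤ 2 * 1 :=
        mul_le_mul (by linarith) hq3 hp3 (by norm_num)
      have hb2 : 0 ≤ (1 + θ t) * Z x ^ 3 := mul_nonneg (by linarith) hp3
      have hb3 : θ t * Z x ^ 2 ≤ 1 * 1 :=
        mul_le_mul hθt1.le hq2 hp2 (by norm_num)
      have hb4 : 0 ≤ θ t * Z x ^ 2 := mul_nonneg hθt0.le hp2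
      constructor <;> linarith
  have intg2 : IntegrableOn (fun x => (-(1 : ℝ) / 12) * Z x ^ 3 + (θ t / 2) * Z x ^ 2)
      (Set.Ioo (-s) s) :=
    (((int3 (-s) s).const_mul _).add ((int2 (-s) s).const_mul _))
  set J2 := ∫ x in Set.Ioo (-s) s, Z x ^ 2 with hJ2def
  clear_value J2
  set J3 := ∫ x in Set.Ioo (-s) s, Z x ^ 3 with hJ3def
  clear_value J3
  -- step 1: pointwise bound on the integrand
  have key1 : (∫ x in Set.Ioo (-s) s,
        (Z x ^ 4 / 4 - (1 + θ t) * Z x ^ 3 / 3 + θ t * Z x ^ 2 / 2))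
      ≤ (-(1 : ℝ) / 12) * J3 + (θ t / 2) * J2 := by
    rw [hJ2def, hJ3def]
    have h1 : (∫ x in Set.Ioo (-s) s,
          (Z x ^ 4 / 4 - (1 + θ t) * Z x ^ 3 / 3 + θ t * Z x ^ 2 / 2))
        ≤ ∫ x in Set.Ioo (-s) s, ((-(1 : ℝ) / 12) * Z x ^ 3 + (θ t / 2) * Z x ^ 2) := by
      apply setIntegral_mono_on int1 intg2 measurableSet_Ioo
      intro x _
      have e0 := mul_nonneg (pow_nonneg (hZ0 x) 3) (sub_nonneg.2 (hZ1 x))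
      have e1 : 0 ≤ Z x ^ 3 - Z x ^ 4 := by
        rw [show Z x ^ 3 - Z x ^ 4 = Z x ^ 3 * (1 - Z x) by ring]
        exact e0
      have e2 : 0 ≤ θ t * Z x ^ 3 := mul_nonneg hθt0.le (pow_nonneg (hZ0 x) 3)
      linarith [e1, e2]
    rwa [integral_add ((int3 (-s) s).const_mul _) ((int2 (-s) s).const_mul _),
      MeasureTheory.integral_const_mul, MeasureTheory.integral_const_mul] at h1
  -- step 2: lower bound for J3
  have key2 : c₃ / t ≤ J3 := by
    rw [hJ3def]
    have hsub : Set.Ioo (-(s / 2)) (s / 2) ⊆ Set.Ioo (-s) s :=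
      Set.Ioo_subset_Ioo (by linarith) (by linarith)
    have h1 : (∫ _x in Set.Ioo (-(s / 2)) (s / 2), (c₁ * (sπ * s)⁻¹) ^ 3)
        ≤ ∫ x in Set.Ioo (-(s / 2)) (s / 2), Z x ^ 3 := by
      apply setIntegral_mono_on (integrableOn_const measure_Ioo_lt_top.ne)
        ((int3 _ _)) measurableSet_Ioo
      intro x hx
      have hxs : |x| ≤ s / 2 := by
        rw [abs_le]; exact ⟨hx.1.le, hx.2.le⟩
      exact pow_le_pow_left₀ (by positivity) (hZge x hxs) 3
    have h2 : (∫ _x in Set.Ioo (-(s / 2)) (s / 2), ((c₁ * (sπ * s)⁻¹) ^ 3 : ℝ))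
        = (c₁ * (sπ * s)⁻¹) ^ 3 * s := by
      rw [setIntegral_const, Real.volume_real_Ioo_of_le (by linarith), smul_eq_mul]
      ring
    have h3 : (c₁ * (sπ * s)⁻¹) ^ 3 * s = c₃ / t := by
      rw [hc₃def, ← hss]
      field_simp
    have h4 : (∫ x in Set.Ioo (-(s / 2)) (s / 2), Z x ^ 3)
        ≤ ∫ x in Set.Ioo (-s) s, Z x ^ 3 := by
      apply setIntegral_mono_set (int3 _ _)
        (ae_of_all _ fun x => pow_nonneg (hZ0 x) 3)
        (HasSubset.Subset.eventuallyLE hsub)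
    rw [h2, h3] at h1
    linarith
  -- step 3: upper bound for J2
  have key3 : J2 ≤ m ^ 2 / (2 * Real.pi * s) := by
    rw [hJ2def]
    have h1 : (∫ x in Set.Ioo (-s) s, Z x ^ 2)
        ≤ ∫ _x in Set.Ioo (-s) s, (Θ * m * (sπ * s)⁻¹) ^ 2 := by
      apply setIntegral_mono_on (int2 _ _)
        (integrableOn_const measure_Ioo_lt_top.ne) measurableSet_Ioo
      intro x _
      exact pow_le_pow_left₀ (hZ0 x) (hZle x) 2
    have h2 : (∫ _x in Set.Ioo (-s) s, ((Θ * m * (sπ * s)⁻¹) ^ 2 : ℝ))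
        = (Θ * m * (sπ * s)⁻¹) ^ 2 * (2 * s) := by
      rw [setIntegral_const, Real.volume_real_Ioo_of_le (by linarith), smul_eq_mul]
      ring
    have h3 : (Θ * m * (sπ * s)⁻¹) ^ 2 * (2 * s) ≤ m ^ 2 / (2 * Real.pi * s) := by
      have hu2 : (sπ * s) ^ 2 = 4 * Real.pi * s ^ 2 := by rw [mul_pow, hsπ2]
      have hcalc : (Θ * m * (sπ * s)⁻¹) ^ 2 * (2 * s) * (2 * Real.pi * s)
          = Θ ^ 2 * m ^ 2 * (((sπ * s)⁻¹) ^ 2 * (sπ * s) ^ 2) := by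
        rw [hu2]; ring
      have hinv : ((sπ * s)⁻¹) ^ 2 * (sπ * s) ^ 2 = 1 := by
        rw [← mul_pow, inv_mul_cancel₀ (by positivity)]
        norm_num
      rw [le_div_iff₀ (by positivity), hcalc, hinv, mul_one]
      have hΘsq : Θ ^ 2 ≤ 1 := pow_le_one₀ hΘ0.le hΘ1
      have := mul_le_mul_of_nonneg_right hΘsq (sq_nonneg m)
      linarith [this]
    calc (∫ x in Set.Ioo (-s) s, Z x ^ 2) ≤ _ := h1
      _ = _ := h2
      _ ≤ _ := h3
  -- step 4: θ is O(1/t)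
  have hθ2I : θ t ≤ 2 * I / t := by
    have h1 : θ t * (t / 2) ≤ ∫ x in Set.Ioc (t / 2) t, θ x := by
      have hconst : (∫ _x in Set.Ioc (t / 2) t, θ t) = θ t * (t / 2) := by
        rw [setIntegral_const, Real.volume_real_Ioc_of_le (by linarith), smul_eq_mul]
        ring
      rw [← hconst]
      apply setIntegral_mono_on (integrableOn_const measure_Ioc_lt_top.ne)
        (hθ_int.mono_set fun x hx => le_of_lt (lt_of_le_of_lt (by linarith) hx.1))
        measurableSet_Ioc
      intro x hx
      exact hθ_anti (Set.mem_Ici.mpr (le_of_lt (lt_of_le_of_lt (by linarith : (0:ℝ) ≤ t / 2) hx.1)))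
        (Set.mem_Ici.mpr ht0.le) hx.2
    have h2 : (∫ x in Set.Ioc (t / 2) t, θ x) ≤ I := by
      rw [hIdef]
      apply setIntegral_mono_set (hθ_int.mono_set Set.Ioi_subset_Ici_self)
        ((ae_restrict_iff' measurableSet_Ioi).mpr
          (ae_of_all _ fun x hx => (hθ_mem x (le_of_lt hx)).1.le))
        (HasSubset.Subset.eventuallyLE fun x hx =>
          (show (0 : ℝ) < x by linarith [hx.1]))
    rw [le_div_iff₀ ht0]
    linarith
  -- step 5: combine
  have key5 : (θ t / 2) * (m ^ 2 / (2 * Real.pi * s)) ≤ c₃ / (24 * t) := by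
    have h1 : (θ t / 2) * (m ^ 2 / (2 * Real.pi * s))
        ≤ ((2 * I / t) / 2) * (m ^ 2 / (2 * Real.pi * s)) := by
      apply mul_le_mul_of_nonneg_right (by linarith) (by positivity)
    have h2 : ((2 * I / t) / 2) * (m ^ 2 / (2 * Real.pi * s))
        = (I * m ^ 2) / (2 * Real.pi * s * t) := by
      field_simp
    have h3 : (I * m ^ 2) / (2 * Real.pi * s * t) ≤ c₃ / (24 * t) := by
      rw [div_le_div_iff₀ (by positivity) (by positivity)]
      linarith [mul_le_mul_of_nonneg_right hEd (le_of_lt (mul_pos two_pos ht0))]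
    calc (θ t / 2) * (m ^ 2 / (2 * Real.pi * s)) ≤ _ := h1
      _ = _ := h2
      _ ≤ _ := h3
  -- final chain
  have hrpow : 0 ≤ (c₃ / 24) * θ t * t ^ (-(1 : ℝ) / 2) :=
    mul_nonneg (mul_nonneg (by positivity) hθt0.le) (Real.rpow_nonneg ht0.le _)
  have heq : (-(1 : ℝ) / 12) * (c₃ / t) + c₃ / (24 * t) = -(c₃ / 24) / t := by
    field_simp
    ring
  have t1 : (-(1 : ℝ) / 12) * J3 ≤ (-(1 : ℝ) / 12) * (c₃ / t) := by linarith [key2]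
  have t2 : (θ t / 2) * J2 ≤ c₃ / (24 * t) :=
    le_trans (mul_le_mul_of_nonneg_left key3 (by linarith)) key5
  calc (∫ x in Set.Ioo (-s) s,
        (Z x ^ 4 / 4 - (1 + θ t) * Z x ^ 3 / 3 + θ t * Z x ^ 2 / 2))
      ≤ (-(1 : ℝ) / 12) * J3 + (θ t / 2) * J2 := key1
    _ ≤ -(c₃ / 24) / t + (c₃ / 24) * θ t * t ^ (-(1 : ℝ) / 2) := by linarith
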